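/- arXiv:1205.6719 — 8 statements merged into one kernel-verified Lean document; each statement's English description precedes it below -/
import Mathlib

section
/- Let ν > 0, Ī₂z > 0, K ∈ ℝ, and Ī₁z, Īs, Ī₂x, Ī₂y ∈ ℝ. Let r, φ₂ : ℝ → ℝ be twice differentiable with r(t) > 0 for all t, and suppose they satisfy the reduced equations of motion: r'' = (K − Ī₂z φ₂')² r / I_z(r)² − (1/ν)·V_r(r, φ₂) and φ₂'' = −(1 + ν r²/Ī₂z)·(1/(ν r²))·V_φ(r, φ₂) + 2 r'(K − Ī₂z φ₂')/(r I_z(r)), where V_r and V_φ are the partial derivatives of V. Then the free energy E(t) = K²/(2 I_z(r)) + (1/2)ν (r')² + Ī₂z ν r² (φ₂')²/(2 I_z(r)) + V(r, φ₂) is constant in t. -/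
open Real

/-- The mutual potential of the oblate-primary / ellipsoid system. -/
noncomputable def potV (ν I1z Is I2x I2y I2z : ℝ) (r φ : ℝ) : ℝ :=
  -(ν / r) * (1 + (1 / (2 * r^2)) *
    (((I1z - Is) - (1/2) * I2x - (1/2) * I2y + I2z)
      + (3/2) * (I2y - I2x) * Real.cos (2 * φ)))

/-- Radial partial derivative of the mutual potential. -/
noncomputable def potVr (ν I1z Is I2x I2y I2z : ℝ) (r φ : ℝ) : ℝ :=
  (ν / r^2) * (1 + (3 / (2 * r^2)) *
    (((I1z - Is) - (1/2) * I2x - (1/2) * I2y + I2z)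
      + (3/2) * (I2y - I2x) * Real.cos (2 * φ)))

/-- Libration-angle partial derivative of the mutual potential. -/
noncomputable def potVφ (ν I1z Is I2x I2y I2z : ℝ) (r φ : ℝ) : ℝ :=
  (3 * ν / (2 * r^3)) * (I2y - I2x) * Real.sin (2 * φ)

/-!
The free energy is a function of the state `(r, ṙ, φ₂, φ̇₂)`; differentiating it along a curve
by the chain rule and substituting the equations of motion for `r̈` and `φ̈₂`, every term cancels,
so the free energy has zero derivative and is constant by the mean value theorem.
-/

section FreeEnergy

variable (ν I1z Is I2x I2y I2z K : ℝ)

/-- The free energy at the state `(r, ṙ, φ₂, φ̇₂) = (r, v, φ, ω)`. -/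
noncomputable def freeEnergy (r v φ ω : ℝ) : ℝ :=
  K^2 / (2 * (I2z + ν * r^2)) + (1/2) * ν * v^2
    + I2z * ν * r^2 * ω^2 / (2 * (I2z + ν * r^2))
    + potV ν I1z Is I2x I2y I2z r φ

variable {ν I1z Is I2x I2y I2z K}

theorem hasDerivAt_potV_comp {r φ : ℝ → ℝ} {r' φ' t : ℝ}
    (hr : HasDerivAt r r' t) (hφ : HasDerivAt φ φ' t) (hr0 : r t ≠ 0) :
    HasDerivAt (fun t => potV ν I1z Is I2x I2y I2z (r t) (φ t))
      (potVr ν I1z Is I2x I2y I2z (r t) (φ t) * r'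
        + potVφ ν I1z Is I2x I2y I2z (r t) (φ t) * φ') t := by
  have hr2 : 2 * r t ^ 2 ≠ 0 := by positivity
  have hcos := ((hφ.const_mul 2).cos.const_mul ((3:ℝ)/2 * (I2y - I2x))).const_add
    ((I1z - Is) - (1/2) * I2x - (1/2) * I2y + I2z)
  have hinv := (hasDerivAt_const t (1:ℝ)).div ((hr.pow 2).const_mul 2) hr2
  have hV := ((hasDerivAt_const t ν).div hr hr0).neg.mul ((hinv.mul hcos).const_add 1)
  refine hV.congr_deriv ?_
  simp only [potVr, potVφ, Pi.div_apply, Pi.mul_apply, Pi.neg_apply, Pi.pow_apply, Nat.cast_ofNat]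
  field_simp
  ring

theorem hasDerivAt_freeEnergy_comp {r v φ ω : ℝ → ℝ} {r' v' φ' ω' t : ℝ}
    (hr : HasDerivAt r r' t) (hv : HasDerivAt v v' t) (hφ : HasDerivAt φ φ' t)
    (hω : HasDerivAt ω ω' t) (hr0 : r t ≠ 0) (hIz : I2z + ν * r t ^ 2 ≠ 0) :
    HasDerivAt (fun t => freeEnergy ν I1z Is I2x I2y I2z K (r t) (v t) (φ t) (ω t))
      (r' * (ν * r t * (I2z^2 * ω t ^ 2 - K^2) / (I2z + ν * r t ^ 2)^2
          + potVr ν I1z Is I2x I2y I2z (r t) (φ t))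
        + ν * v t * v'
        + I2z * ν * r t ^ 2 * ω t * ω' / (I2z + ν * r t ^ 2)
        + potVφ ν I1z Is I2x I2y I2z (r t) (φ t) * φ') t := by
  have h2Iz : 2 * (I2z + ν * r t ^ 2) ≠ 0 := mul_ne_zero two_ne_zero hIz
  have hden := (((hr.pow 2).const_mul ν).const_add I2z).const_mul 2
  refine (((((hasDerivAt_const t (K^2)).div hden h2Iz).add
    ((hv.pow 2).const_mul ((1:ℝ)/2 * ν))).add
    ((((hr.pow 2).const_mul (I2z * ν)).mul (hω.pow 2)).div hden h2Iz)).add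
    (hasDerivAt_potV_comp hr hφ hr0)).congr_deriv ?_
  simp only [potVr, Pi.mul_apply, Pi.pow_apply, Nat.cast_ofNat]
  field_simp
  ring

/-- After substitution the potential terms cancel outright and the remaining radial terms
through `I₂z²ω² - K² + (K - I₂z ω)² + 2 I₂z ω (K - I₂z ω) = 0`. -/
theorem freeEnergy_rate_eq_zero {r v ω r'' ω' Vr Vφ : ℝ}
    (hν : ν ≠ 0) (hI : I2z ≠ 0) (hr0 : r ≠ 0) (hIz : I2z + ν * r ^ 2 ≠ 0)
    (hr'' : r'' = (K - I2z * ω)^2 * r / (I2z + ν * r^2)^2 - (1 / ν) * Vr)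
    (hω' : ω' = -(1 + ν * r^2 / I2z) * (1 / (ν * r^2)) * Vφ
      + 2 * v * (K - I2z * ω) / (r * (I2z + ν * r^2))) :
    v * (ν * r * (I2z^2 * ω ^ 2 - K^2) / (I2z + ν * r ^ 2)^2 + Vr)
      + ν * v * r'' + I2z * ν * r ^ 2 * ω * ω' / (I2z + ν * r ^ 2) + Vφ * ω = 0 := by
  subst hr'' hω'
  field_simp
  ring

end FreeEnergy

/-- Conservation of the free energy along solutions of the reduced
two-degree-of-freedom equations of motion. -/
theorem free_energy_conserved
    (ν I2z K I1z Is I2x I2y : ℝ) (hν : 0 < ν) (hI : 0 < I2z)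
    (r φ₂ : ℝ → ℝ)
    (hr : Differentiable ℝ r) (hr' : Differentiable ℝ (deriv r))
    (hφ : Differentiable ℝ φ₂) (hφ' : Differentiable ℝ (deriv φ₂))
    (hrpos : ∀ t, 0 < r t)
    (heomr : ∀ t, deriv (deriv r) t =
      (K - I2z * deriv φ₂ t)^2 * r t / (I2z + ν * (r t)^2)^2
      - (1 / ν) * potVr ν I1z Is I2x I2y I2z (r t) (φ₂ t))
    (heomφ : ∀ t, deriv (deriv φ₂) t =
      -(1 + ν * (r t)^2 / I2z) * (1 / (ν * (r t)^2)) *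
        potVφ ν I1z Is I2x I2y I2z (r t) (φ₂ t)
      + 2 * deriv r t * (K - I2z * deriv φ₂ t) / (r t * (I2z + ν * (r t)^2))) :
    ∀ t s : ℝ,
      K^2 / (2 * (I2z + ν * (r t)^2)) + (1/2) * ν * (deriv r t)^2
        + I2z * ν * (r t)^2 * (deriv φ₂ t)^2 / (2 * (I2z + ν * (r t)^2))
        + potV ν I1z Is I2x I2y I2z (r t) (φ₂ t)
      = K^2 / (2 * (I2z + ν * (r s)^2)) + (1/2) * ν * (deriv r s)^2
        + I2z * ν * (r s)^2 * (deriv φ₂ s)^2 / (2 * (I2z + ν * (r s)^2))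
        + potV ν I1z Is I2x I2y I2z (r s) (φ₂ s) := by
  have hE : ∀ u, HasDerivAt (fun t => freeEnergy ν I1z Is I2x I2y I2z K
      (r t) (deriv r t) (φ₂ t) (deriv φ₂ t)) 0 u := by
    intro u
    have hr0 := (hrpos u).ne'
    have hIz : I2z + ν * r u ^ 2 ≠ 0 := by positivity
    exact (hasDerivAt_freeEnergy_comp (hr u).hasDerivAt (hr' u).hasDerivAt
      (hφ u).hasDerivAt (hφ' u).hasDerivAt hr0 hIz).congr_deriv
      (freeEnergy_rate_eq_zero hν.ne' hI.ne' hr0 hIz (heomr u) (heomφ u))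
  intro t s
  exact is_const_of_deriv_eq_zero (fun u => (hE u).differentiableAt) (fun u => (hE u).deriv) t s
end

section
/- (Sufficient condition for bounded libration via zero-velocity curves.) Let ν > 0, Ī₂z > 0, K ∈ ℝ, and Ī₁z, Īs, Ī₂x, Ī₂y ∈ ℝ, and define W(r,φ) = K²/(2(Ī₂z + ν r²)) + V(r,φ). Let r, φ₂ : ℝ → ℝ be continuous with r(t) > 0 for all t, and let E ∈ ℝ satisfy W(r(t), φ₂(t)) ≤ E for all t (the zero-velocity inequality). Suppose there exist 0 < r₁ < r₂ such that W(r₁, φ) > E and W(r₂, φ) > E for every φ ∈ ℝ, and W(ρ, π/2) > E and W(ρ, −π/2) > E for every ρ ∈ [r₁, r₂]. If r(0) ∈ (r₁, r₂) and φ₂(0) ∈ (−π/2, π/2), then for all t ∈ ℝ one has r(t) ∈ (r₁, r₂) and φ₂(t) ∈ (−π/2, π/2); in particular the libration angle stays strictly below 90 degrees for all time. -/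
open Real

/-- The effective (zero-velocity) potential `W(r,φ) = K²/(2 I_z(r)) + V(r,φ)`. -/
noncomputable def potW (ν I2z K I1z Is I2x I2y : ℝ) (r φ : ℝ) : ℝ :=
  K^2 / (2 * (I2z + ν * r^2)) + potV ν I1z Is I2x I2y I2z r φ

/-!
The zero-velocity inequality `W ≤ E` keeps the trajectory off the boundary of the closed
rectangle `[r₁, r₂] × [-π/2, π/2]`, where `W > E`. Hence the set of times at which the trajectory
lies in the open rectangle coincides with the set of times at which it lies in the closed one:
it is both open and closed, contains `t = 0`, and is therefore all of `ℝ`.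
-/

open Set

theorem Continuous.apply_mem_of_mem_closed_imp_mem_open {X Y : Type*} [TopologicalSpace X]
    [PreconnectedSpace X] [TopologicalSpace Y] {f : X → Y} (hf : Continuous f) {U C : Set Y}
    (hU : IsOpen U) (hC : IsClosed C) (hUC : U ⊆ C) (htrap : ∀ x, f x ∈ C → f x ∈ U)
    {x₀ : X} (h₀ : f x₀ ∈ U) (x : X) : f x ∈ U := by
  have hpre : f ⁻¹' U = f ⁻¹' C := Subset.antisymm (preimage_mono hUC) htrap
  have hclopen : IsClopen (f ⁻¹' U) := ⟨hpre ▸ hC.preimage hf, hU.preimage hf⟩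
  exact show x ∈ f ⁻¹' U from hclopen.eq_univ ⟨x₀, h₀⟩ ▸ mem_univ x

theorem mem_Ioo_prod_Ioo_of_le_of_lt_on_boundary {W : ℝ → ℝ → ℝ} {E r₁ r₂ a b ρ φ : ℝ}
    (h₁ : ∀ φ ∈ Icc a b, E < W r₁ φ) (h₂ : ∀ φ ∈ Icc a b, E < W r₂ φ)
    (ha : ∀ ρ ∈ Icc r₁ r₂, E < W ρ a) (hb : ∀ ρ ∈ Icc r₁ r₂, E < W ρ b)
    (hρ : ρ ∈ Icc r₁ r₂) (hφ : φ ∈ Icc a b) (hW : W ρ φ ≤ E) :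
    ρ ∈ Ioo r₁ r₂ ∧ φ ∈ Ioo a b := by
  have hρ₁ : r₁ ≠ ρ := by rintro rfl; exact (h₁ φ hφ).not_ge hW
  have hρ₂ : ρ ≠ r₂ := by rintro rfl; exact (h₂ φ hφ).not_ge hW
  have hφa : a ≠ φ := by rintro rfl; exact (ha ρ hρ).not_ge hW
  have hφb : φ ≠ b := by rintro rfl; exact (hb ρ hρ).not_ge hW
  exact ⟨⟨hρ.1.lt_of_ne hρ₁, hρ.2.lt_of_ne hρ₂⟩, ⟨hφ.1.lt_of_ne hφa, hφ.2.lt_of_ne hφb⟩⟩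

theorem bounded_libration_of_closed_zvc_general
    (ν I2z K I1z Is I2x I2y : ℝ)
    (r φ₂ : ℝ → ℝ) (hrc : Continuous r) (hφc : Continuous φ₂)
    (E : ℝ)
    (hZVC : ∀ t, potW ν I2z K I1z Is I2x I2y (r t) (φ₂ t) ≤ E)
    (r₁ r₂ : ℝ)
    (hW₁ : ∀ φ : ℝ, E < potW ν I2z K I1z Is I2x I2y r₁ φ)
    (hW₂ : ∀ φ : ℝ, E < potW ν I2z K I1z Is I2x I2y r₂ φ)
    (hWp : ∀ ρ ∈ Set.Icc r₁ r₂, E < potW ν I2z K I1z Is I2x I2y ρ (π/2))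
    (hWm : ∀ ρ ∈ Set.Icc r₁ r₂, E < potW ν I2z K I1z Is I2x I2y ρ (-(π/2)))
    (h0r : r 0 ∈ Set.Ioo r₁ r₂) (h0φ : φ₂ 0 ∈ Set.Ioo (-(π/2)) (π/2)) :
    ∀ t : ℝ, r t ∈ Set.Ioo r₁ r₂ ∧ φ₂ t ∈ Set.Ioo (-(π/2)) (π/2) :=
  (hrc.prodMk hφc).apply_mem_of_mem_closed_imp_mem_open
    (isOpen_Ioo.prod isOpen_Ioo) (isClosed_Icc.prod isClosed_Icc)
    (prod_mono Ioo_subset_Icc_self Ioo_subset_Icc_self)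
    (fun t ht => mem_Ioo_prod_Ioo_of_le_of_lt_on_boundary (fun φ _ => hW₁ φ) (fun φ _ => hW₂ φ)
      hWm hWp ht.1 ht.2 (hZVC t))
    (x₀ := 0) ⟨h0r, h0φ⟩

/-- Sufficient condition for bounded libration via zero-velocity curves:
if the zero-velocity curve for the energy level `E` seals off the rectangle
`(r₁, r₂) × (−π/2, π/2)` in `(r, φ₂)` space, then a trajectory satisfying the
zero-velocity inequality that starts inside stays inside; in particular the
libration angle stays strictly below 90°. -/
theorem bounded_libration_of_closed_zvc
    (ν I2z K I1z Is I2x I2y : ℝ) (hν : 0 < ν) (hI : 0 < I2z)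
    (r φ₂ : ℝ → ℝ) (hrc : Continuous r) (hφc : Continuous φ₂)
    (hrpos : ∀ t, 0 < r t)
    (E : ℝ)
    (hZVC : ∀ t, potW ν I2z K I1z Is I2x I2y (r t) (φ₂ t) ≤ E)
    (r₁ r₂ : ℝ) (hr₁ : 0 < r₁) (hr₁₂ : r₁ < r₂)
    (hW₁ : ∀ φ : ℝ, E < potW ν I2z K I1z Is I2x I2y r₁ φ)
    (hW₂ : ∀ φ : ℝ, E < potW ν I2z K I1z Is I2x I2y r₂ φ)
    (hWp : ∀ ρ ∈ Set.Icc r₁ r₂, E < potW ν I2z K I1z Is I2x I2y ρ (π/2))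
    (hWm : ∀ ρ ∈ Set.Icc r₁ r₂, E < potW ν I2z K I1z Is I2x I2y ρ (-(π/2)))
    (h0r : r 0 ∈ Set.Ioo r₁ r₂) (h0φ : φ₂ 0 ∈ Set.Ioo (-(π/2)) (π/2)) :
    ∀ t : ℝ, r t ∈ Set.Ioo r₁ r₂ ∧ φ₂ t ∈ Set.Ioo (-(π/2)) (π/2) :=
  bounded_libration_of_closed_zvc_general ν I2z K I1z Is I2x I2y r φ₂ hrc hφc E hZVC r₁ r₂ hW₁ hW₂
    hWp hWm h0r h0φ
end

section
/- Let ν > 0, Ī₂z > 0, Ī₂y > Ī₂x, and K ∈ ℝ. Consider the free energy E(r, φ₂, ṙ, φ̇₂) = K²/(2 I_z(r)) + (1/2)ν ṙ² + Ī₂z ν r² φ̇₂²/(2 I_z(r)) + V(r, φ₂) on the domain r > 0. If at a point (r, φ₂, ṙ, φ̇₂) all four partial derivatives of E vanish, then ṙ = 0, φ̇₂ = 0, and sin 2φ₂ = 0 (so φ₂ ∈ {0, ±π/2, π} modulo 2π); furthermore, at such a point the remaining stationarity condition ∂E/∂r = 0 reads −ν r K²/I_z(r)² + (ν/r²)·[1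 + 3(Ī₁z − Īs + C₂)/(2r²)] = 0, where C₂ = −2Ī₂x + Ī₂y + Ī₂z if cos 2φ₂ = 1 and C₂ = Ī₂x − 2Ī₂y + Ī₂z if cos 2φ₂ = −1. -/
/-!
The free energy is quadratic in `ṙ` and `φ̇₂` with positive coefficients `ν` and
`Ī₂z ν r² / I_z(r)`, so those partials vanish only at zero velocity. The angle enters only
through `V = −ν/r − ν (D + (3/2)(Ī₂y − Ī₂x) cos 2φ₂) / (2r³)`, whose `φ₂`-derivative is
`3ν(Ī₂y − Ī₂x) sin 2φ₂ / (2r³)` with a positive coefficient. Once `φ̇₂ = 0`, the radial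
partial is that of the amended potential `K²/(2 I_z(r)) + V`, and `cos 2φ₂ = ±1` turns the
bracket into `Ī₁z − Īs + C₂`.
-/
open Real

/-- The free energy of the reduced system as a function of the state
`(r, φ₂, ṙ, φ̇₂)`. -/
noncomputable def freeE (ν I2z K I1z Is I2x I2y : ℝ)
    (r φ₂ rdot φdot : ℝ) : ℝ :=
  K^2 / (2 * (I2z + ν * r^2)) + (1/2) * ν * rdot^2
    + I2z * ν * r^2 * φdot^2 / (2 * (I2z + ν * r^2))
    + potV ν I1z Is I2x I2y I2z r φ₂

/-- The paper's `D + (3/2)(Ī₂y − Ī₂x) cos 2φ`. -/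
noncomputable def potCoeff (I1z Is I2x I2y I2z φ : ℝ) : ℝ :=
  ((I1z - Is) - (1/2) * I2x - (1/2) * I2y + I2z) + (3/2) * (I2y - I2x) * Real.cos (2 * φ)

lemma potV_eq (ν I1z Is I2x I2y I2z r φ : ℝ) :
    potV ν I1z Is I2x I2y I2z r φ =
      -(ν / r) - ν * potCoeff I1z Is I2x I2y I2z φ / (2 * r ^ 3) := by
  simp only [potV, potCoeff]
  ring

lemma potCoeff_of_cos_eq_one {I1z Is I2x I2y I2z φ : ℝ} (h : Real.cos (2 * φ) = 1) :
    potCoeff I1z Is I2x I2y I2z φ = I1z - Is + (-2 * I2x + I2y + I2z) := by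
  rw [potCoeff, h]
  ring

lemma potCoeff_of_cos_eq_neg_one {I1z Is I2x I2y I2z φ : ℝ} (h : Real.cos (2 * φ) = -1) :
    potCoeff I1z Is I2x I2y I2z φ = I1z - Is + (I2x - 2 * I2y + I2z) := by
  rw [potCoeff, h]
  ring

lemma hasDerivAt_potCoeff (I1z Is I2x I2y I2z φ : ℝ) :
    HasDerivAt (potCoeff I1z Is I2x I2y I2z) (-3 * (I2y - I2x) * Real.sin (2 * φ)) φ := by
  have h := (((hasDerivAt_id φ).const_mul 2).cos.const_mul ((3/2) * (I2y - I2x))).const_add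
    ((I1z - Is) - (1/2) * I2x - (1/2) * I2y + I2z)
  exact h.congr_deriv (by simp only [id]; ring)

lemma hasDerivAt_potV_r (ν I1z Is I2x I2y I2z φ : ℝ) {r : ℝ} (hr : r ≠ 0) :
    HasDerivAt (fun x => potV ν I1z Is I2x I2y I2z x φ)
      (ν / r ^ 2 * (1 + 3 * potCoeff I1z Is I2x I2y I2z φ / (2 * r ^ 2))) r := by
  simp only [potV_eq]
  set A := potCoeff I1z Is I2x I2y I2z φ
  have h := ((hasDerivAt_inv hr).const_mul ν).neg.sub
    (((hasDerivAt_pow 3 r).inv (by positivity)).const_mul (ν * A / 2))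
  refine (h.congr_deriv ?_).congr_of_eventuallyEq (Filter.Eventually.of_forall fun x => ?_)
  · field_simp
    ring
  · simp only [Pi.sub_apply, Pi.neg_apply, Pi.inv_apply]
    ring

lemma hasDerivAt_potV_φ (ν I1z Is I2x I2y I2z r φ : ℝ) :
    HasDerivAt (fun x => potV ν I1z Is I2x I2y I2z r x)
      (3 * ν * (I2y - I2x) / (2 * r ^ 3) * Real.sin (2 * φ)) φ := by
  simp only [potV_eq]
  have h := ((hasDerivAt_potCoeff I1z Is I2x I2y I2z φ).const_mul (ν / (2 * r ^ 3))).const_sub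
    (-(ν / r))
  refine (h.congr_deriv ?_).congr_of_eventuallyEq (Filter.Eventually.of_forall fun x => ?_) <;>
    ring

section freeE

variable (ν I2z K I1z Is I2x I2y : ℝ)

lemma hasDerivAt_freeE_rdot (r φ₂ rdot φdot : ℝ) :
    HasDerivAt (fun x => freeE ν I2z K I1z Is I2x I2y r φ₂ x φdot) (ν * rdot) rdot := by
  have h := ((hasDerivAt_pow 2 rdot).const_mul ((1/2) * ν)).add_const
    (K^2 / (2 * (I2z + ν * r^2)) + I2z * ν * r^2 * φdot^2 / (2 * (I2z + ν * r^2))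
      + potV ν I1z Is I2x I2y I2z r φ₂)
  refine (h.congr_deriv ?_).congr_of_eventuallyEq (Filter.Eventually.of_forall fun x => ?_)
  · ring
  · simp only [freeE]
    ring

lemma hasDerivAt_freeE_φdot (r φ₂ rdot φdot : ℝ) :
    HasDerivAt (fun x => freeE ν I2z K I1z Is I2x I2y r φ₂ rdot x)
      (I2z * ν * r ^ 2 / (I2z + ν * r ^ 2) * φdot) φdot := by
  have h := ((hasDerivAt_pow 2 φdot).const_mul (I2z * ν * r^2 / (2 * (I2z + ν * r^2)))).add_const
    (K^2 / (2 * (I2z + ν * r^2)) + (1/2) * ν * rdot^2 + potV ν I1z Is I2x I2y I2z r φ₂)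
  refine (h.congr_deriv ?_).congr_of_eventuallyEq (Filter.Eventually.of_forall fun x => ?_)
  · have h2 : (2:ℝ) * (2 * (I2z + ν * r ^ 2))⁻¹ = (I2z + ν * r ^ 2)⁻¹ := by
      rw [mul_inv, ← mul_assoc, mul_inv_cancel₀ two_ne_zero, one_mul]
    linear_combination I2z * ν * r ^ 2 * φdot * h2
  · simp only [freeE]
    ring

lemma hasDerivAt_freeE_φ₂ (r φ₂ rdot φdot : ℝ) :
    HasDerivAt (fun x => freeE ν I2z K I1z Is I2x I2y r x rdot φdot)
      (3 * ν * (I2y - I2x) / (2 * r ^ 3) * Real.sin (2 * φ₂)) φ₂ :=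
  (hasDerivAt_potV_φ ν I1z Is I2x I2y I2z r φ₂).const_add _

lemma hasDerivAt_freeE_r_φdot_zero (φ₂ rdot : ℝ) {r : ℝ} (hr : r ≠ 0)
    (hIz : I2z + ν * r ^ 2 ≠ 0) :
    HasDerivAt (fun x => freeE ν I2z K I1z Is I2x I2y x φ₂ rdot 0)
      (-ν * r * K ^ 2 / (I2z + ν * r ^ 2) ^ 2
        + ν / r ^ 2 * (1 + 3 * potCoeff I1z Is I2x I2y I2z φ₂ / (2 * r ^ 2))) r := by
  have hIz' := (((hasDerivAt_pow 2 r).const_mul ν).const_add I2z).inv hIz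
  have h := ((hIz'.const_mul (K ^ 2 / 2)).add_const ((1/2) * ν * rdot ^ 2)).add
    (hasDerivAt_potV_r ν I1z Is I2x I2y I2z φ₂ hr)
  refine (h.congr_deriv ?_).congr_of_eventuallyEq (Filter.Eventually.of_forall fun x => ?_)
  · field_simp
    ring
  · simp only [freeE, Pi.add_apply, Pi.inv_apply, div_eq_mul_inv, mul_inv]
    ring

end freeE

/-- Stationary points of the free energy at fixed free angular momentum:
all four partials vanishing forces `ṙ = 0`, `φ̇₂ = 0`, `sin 2φ₂ = 0`, and the
radial stationarity condition with the appropriate `C₂±`. -/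
theorem relative_equilibrium_conditions
    (ν I2z I1z Is I2x I2y K : ℝ) (hν : 0 < ν) (hI : 0 < I2z)
    (hxy : I2x < I2y)
    (r φ₂ rdot φdot : ℝ) (hr : 0 < r)
    (h₁ : deriv (fun x => freeE ν I2z K I1z Is I2x I2y x φ₂ rdot φdot) r = 0)
    (h₂ : deriv (fun x => freeE ν I2z K I1z Is I2x I2y r x rdot φdot) φ₂ = 0)
    (h₃ : deriv (fun x => freeE ν I2z K I1z Is I2x I2y r φ₂ x φdot) rdot = 0)
    (h₄ : deriv (fun x => freeE ν I2z K I1z Is I2x I2y r φ₂ rdot x) φdot = 0) :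
    rdot = 0 ∧ φdot = 0 ∧ Real.sin (2 * φ₂) = 0 ∧
    ((Real.cos (2 * φ₂) = 1 →
      -(ν) * r * K^2 / (I2z + ν * r^2)^2
        + (ν / r^2) * (1 + 3 * (I1z - Is + (-2*I2x + I2y + I2z)) / (2 * r^2)) = 0) ∧
     (Real.cos (2 * φ₂) = -1 →
      -(ν) * r * K^2 / (I2z + ν * r^2)^2
        + (ν / r^2) * (1 + 3 * (I1z - Is + (I2x - 2*I2y + I2z)) / (2 * r^2)) = 0)) := by
  have hIz : 0 < I2z + ν * r ^ 2 := by positivity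
  have hrdot : rdot = 0 :=
    (mul_eq_zero.mp ((hasDerivAt_freeE_rdot ..).deriv.symm.trans h₃)).resolve_left hν.ne'
  have hφdot : φdot = 0 :=
    (mul_eq_zero.mp ((hasDerivAt_freeE_φdot ..).deriv.symm.trans h₄)).resolve_left
      (by positivity)
  have hsin : Real.sin (2 * φ₂) = 0 :=
    (mul_eq_zero.mp ((hasDerivAt_freeE_φ₂ ..).deriv.symm.trans h₂)).resolve_left
      (div_pos (mul_pos (mul_pos three_pos hν) (sub_pos.mpr hxy)) (by positivity)).ne'
  subst hφdot
  have hradial := (hasDerivAt_freeE_r_φdot_zero ν I2z K I1z Is I2x I2y φ₂ rdot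
    hr.ne' hIz.ne').deriv.symm.trans h₁
  refine ⟨hrdot, rfl, hsin, fun hcos => ?_, fun hcos => ?_⟩
  · rwa [potCoeff_of_cos_eq_one hcos] at hradial
  · rwa [potCoeff_of_cos_eq_neg_one hcos] at hradial
end

section
/- Let ν > 0, Ī₂z > 0, Ī₂y > Ī₂x, K ∈ ℝ, and consider the free energy E(r, φ₂, ṙ, φ̇₂) = K²/(2 I_z(r)) + (1/2)ν ṙ² + Ī₂z ν r² φ̇₂²/(2 I_z(r)) + V(r, φ₂) on the domain r > 0. Then for every r₀ > 0, the point (r₀, π/2, 0, 0) is neither a local minimum nor a local maximum of E: every neighborhood of this point contains points where E is strictly larger (obtained by varying ṙ) and points where E is strictly smaller (obtained by varying φ₂ away from π/2). In particular, the φ₂ = 90° relative equilibrium is always an energetic saddle point. -/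
open Real

/-!
Along the line through `(r₀, π/2, 0, 0)` in which only `ṙ` varies, the energy grows by `ν ṙ² / 2`.
Along the line in which only `φ₂` varies, `cos 2φ + 1 = 2 cos² φ` turns the energy into its value
at `π/2` minus `3ν (I₂y − I₂x) cos² φ / (2 r₀³)`, which is strictly smaller wherever `cos φ ≠ 0`,
e.g. just to the right of `π/2`.
-/

open Filter Topology

theorem not_isLocalMin_of_frequently_lt {X β : Type*} [TopologicalSpace X] [Preorder β]
    {f : X → β} {a : X} (h : ∃ᶠ x in 𝓝 a, f x < f a) : ¬ IsLocalMin f a :=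
  fun hmin => h (hmin.mono fun _ hx => hx.not_gt)

theorem not_isLocalMax_of_frequently_gt {X β : Type*} [TopologicalSpace X] [Preorder β]
    {f : X → β} {a : X} (h : ∃ᶠ x in 𝓝 a, f a < f x) : ¬ IsLocalMax f a :=
  fun hmax => h (hmax.mono fun _ hx => hx.not_gt)

theorem frequently_cos_ne_zero_nhds_pi_div_two : ∃ᶠ x in 𝓝 (π / 2), cos x ≠ 0 := by
  have hcos : ∀ᶠ x in 𝓝[>] (π / 2), cos x ≠ 0 := by
    filter_upwards [Ioo_mem_nhdsGT (by linarith [pi_pos] : π / 2 < π + π / 2)] with x hx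
    exact (cos_neg_of_pi_div_two_lt_of_lt hx.1 hx.2).ne
  exact hcos.frequently.filter_mono nhdsWithin_le_nhds

section FreeEnergy

variable (ν I2z K I1z Is I2x I2y : ℝ)

theorem freeE_eq_add_rdot_sq (r φ rdot : ℝ) :
    freeE ν I2z K I1z Is I2x I2y r φ rdot 0
      = freeE ν I2z K I1z Is I2x I2y r φ 0 0 + ν / 2 * rdot ^ 2 := by
  unfold freeE
  ring

theorem freeE_eq_sub_cos_sq (r φ : ℝ) :
    freeE ν I2z K I1z Is I2x I2y r φ 0 0
      = freeE ν I2z K I1z Is I2x I2y r (π / 2) 0 0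
        - 3 * ν * (I2y - I2x) / (2 * r ^ 3) * cos φ ^ 2 := by
  unfold freeE potV
  rw [cos_two_mul, cos_two_mul, cos_pi_div_two]
  ring

variable {ν}

theorem frequently_freeE_lt_freeE_rdot (hν : 0 < ν) (r φ : ℝ) :
    ∃ᶠ rdot in 𝓝 0, freeE ν I2z K I1z Is I2x I2y r φ 0 0
      < freeE ν I2z K I1z Is I2x I2y r φ rdot 0 := by
  have hgt : ∀ᶠ rdot in 𝓝[≠] (0 : ℝ), freeE ν I2z K I1z Is I2x I2y r φ 0 0
      < freeE ν I2z K I1z Is I2x I2y r φ rdot 0 := by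
    filter_upwards [self_mem_nhdsWithin] with rdot (hrdot : rdot ≠ 0)
    have : 0 < ν / 2 * rdot ^ 2 := by positivity
    linarith [freeE_eq_add_rdot_sq ν I2z K I1z Is I2x I2y r φ rdot]
  exact hgt.frequently.filter_mono nhdsWithin_le_nhds

variable {I2x I2y}

theorem frequently_freeE_lt_freeE_pi_div_two (hν : 0 < ν) (hxy : I2x < I2y) {r : ℝ}
    (hr : 0 < r) :
    ∃ᶠ φ in 𝓝 (π / 2), freeE ν I2z K I1z Is I2x I2y r φ 0 0
      < freeE ν I2z K I1z Is I2x I2y r (π / 2) 0 0 := by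
  refine frequently_cos_ne_zero_nhds_pi_div_two.mono fun φ hφ => ?_
  rw [freeE_eq_sub_cos_sq]
  have : 0 < 3 * ν * (I2y - I2x) / (2 * r ^ 3) * cos φ ^ 2 := by
    have : 0 < I2y - I2x := sub_pos.2 hxy
    positivity
  linarith

end FreeEnergy

theorem ninety_degree_equilibrium_is_saddle_general
    (ν I2z I1z Is I2x I2y K : ℝ) (hν : 0 < ν)
    (hxy : I2x < I2y) (r₀ : ℝ) (hr₀ : 0 < r₀) :
    ¬ IsLocalMin (fun p : ℝ × ℝ × ℝ × ℝ =>
        freeE ν I2z K I1z Is I2x I2y p.1 p.2.1 p.2.2.1 p.2.2.2)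
        (r₀, π/2, 0, 0) ∧
    ¬ IsLocalMax (fun p : ℝ × ℝ × ℝ × ℝ =>
        freeE ν I2z K I1z Is I2x I2y p.1 p.2.1 p.2.2.1 p.2.2.2)
        (r₀, π/2, 0, 0) ∧
    ∀ ε > (0 : ℝ),
      (∃ rdot : ℝ, |rdot| < ε ∧
        freeE ν I2z K I1z Is I2x I2y r₀ (π/2) 0 0
          < freeE ν I2z K I1z Is I2x I2y r₀ (π/2) rdot 0) ∧
      (∃ φ : ℝ, |φ - π/2| < ε ∧
        freeE ν I2z K I1z Is I2x I2y r₀ φ 0 0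
          < freeE ν I2z K I1z Is I2x I2y r₀ (π/2) 0 0) := by
  have hrdot := frequently_freeE_lt_freeE_rdot I2z K I1z Is I2x I2y hν r₀ (π / 2)
  have hφ := frequently_freeE_lt_freeE_pi_div_two I2z K I1z Is hν hxy hr₀
  have hrdot_curve : Tendsto (fun t : ℝ => (r₀, π / 2, t, (0 : ℝ))) (𝓝 0)
      (𝓝 (r₀, π / 2, 0, 0)) := (by fun_prop : Continuous _).tendsto' _ _ rfl
  have hφ_curve : Tendsto (fun φ : ℝ => (r₀, φ, (0 : ℝ), (0 : ℝ))) (𝓝 (π / 2))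
      (𝓝 (r₀, π / 2, 0, 0)) := (by fun_prop : Continuous _).tendsto' _ _ rfl
  refine ⟨not_isLocalMin_of_frequently_lt (hφ_curve.frequently hφ),
    not_isLocalMax_of_frequently_gt (hrdot_curve.frequently hrdot), fun ε hε => ⟨?_, ?_⟩⟩
  · obtain ⟨rdot, hball, hlt⟩ := Metric.nhds_basis_ball.frequently_iff.1 hrdot ε hε
    exact ⟨rdot, by simpa using hball, hlt⟩
  · obtain ⟨φ, hball, hlt⟩ := Metric.nhds_basis_ball.frequently_iff.1 hφ ε hε
    exact ⟨φ, by simpa [Real.dist_eq] using hball, hlt⟩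

/-- The `φ₂ = 90°` relative equilibrium is always an energetic saddle point:
the point `(r₀, π/2, 0, 0)` is neither a local minimum nor a local maximum of
the free energy, since every neighborhood contains points with strictly larger
energy (varying `ṙ`) and points with strictly smaller energy (varying `φ₂`). -/
theorem ninety_degree_equilibrium_is_saddle
    (ν I2z I1z Is I2x I2y K : ℝ) (hν : 0 < ν) (hI : 0 < I2z)
    (hxy : I2x < I2y) (r₀ : ℝ) (hr₀ : 0 < r₀) :
    ¬ IsLocalMin (fun p : ℝ × ℝ × ℝ × ℝ =>
        freeE ν I2z K I1z Is I2x I2y p.1 p.2.1 p.2.2.1 p.2.2.2)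
        (r₀, π/2, 0, 0) ∧
    ¬ IsLocalMax (fun p : ℝ × ℝ × ℝ × ℝ =>
        freeE ν I2z K I1z Is I2x I2y p.1 p.2.1 p.2.2.1 p.2.2.2)
        (r₀, π/2, 0, 0) ∧
    ∀ ε > (0 : ℝ),
      (∃ rdot : ℝ, |rdot| < ε ∧
        freeE ν I2z K I1z Is I2x I2y r₀ (π/2) 0 0
          < freeE ν I2z K I1z Is I2x I2y r₀ (π/2) rdot 0) ∧
      (∃ φ : ℝ, |φ - π/2| < ε ∧
        freeE ν I2z K I1z Is I2x I2y r₀ φ 0 0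
          < freeE ν I2z K I1z Is I2x I2y r₀ (π/2) 0 0) :=
  ninety_degree_equilibrium_is_saddle_general ν I2z I1z Is I2x I2y K hν hxy r₀ hr₀
end

section
/- (Sufficient condition for circulation, ν ≈ 1 decoupled case.) Let ν > 0, Ī₂z > 0, A > 0, S ∈ ℝ with S ≥ 3A, and r_a > 0. Let r, φ₂ : ℝ → ℝ be differentiable with 0 < r(t) ≤ r_a for all t, and suppose the libration energy c(t) = Ī₂z ν r² (φ₂')²/(2 I_z(r)) + (3ν/(2r³)) A sin²φ₂ − (ν/(2r³)) S is constant in t. Suppose at some time t₀ we have φ₂(t₀) = 0 and, writing r₀ = r(t₀), the initial libration rate satisfies φ₂'(t₀)² ≥ (I_z(r₀)/(Ī₂z r₀⁵))·[3A + (S − 3A)(1 − r₀³/r_a³)]. Then for every time t at which φ₂'(t) = 0 one has sin²φ₂(t) ≥ 1 (hence |sin φ₂(t)| = 1); i.e. the libration rate can only vanish at a libration angle of ±90°, so the secondary cannot turn around inside the libration region and must circulate. -/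
/-!
Conservation of the libration energy `c` links the two instants. At the `φ₂ = 0` crossing the
rate condition bounds the kinetic term from below, which gives `c ≥ -ν (S - 3A) / (2 r_a³)`.
At a turning point `φ₂' = 0` the energy is `ν (3A sin² φ₂ - S) / (2 r³)`; since `r ≤ r_a` and
`S ≥ 3A`, the bound forces `3A sin² φ₂ ≥ S - (S - 3A) r³ / r_a³ ≥ 3A`.
-/

open Real

noncomputable def librationEnergy (ν I2z A S r ω φ : ℝ) : ℝ :=
  I2z * ν * r ^ 2 * ω ^ 2 / (2 * (I2z + ν * r ^ 2))
    + (3 * ν / (2 * r ^ 3)) * A * sin φ ^ 2 - (ν / (2 * r ^ 3)) * S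

section LibrationEnergy

variable {ν I2z A S r : ℝ}

theorem librationEnergy_zero_rate (φ : ℝ) :
    librationEnergy ν I2z A S r 0 φ = ν * (3 * A * sin φ ^ 2 - S) / (2 * r ^ 3) := by
  unfold librationEnergy
  ring

theorem div_mul_le_kinetic_of_rate_le {B ω : ℝ} (hν : 0 < ν) (hI : 0 < I2z) (hr : 0 < r)
    (hrate : (I2z + ν * r ^ 2) / (I2z * r ^ 5) * B ≤ ω ^ 2) :
    ν / (2 * r ^ 3) * B ≤ I2z * ν * r ^ 2 * ω ^ 2 / (2 * (I2z + ν * r ^ 2)) := by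
  have hfac : 0 ≤ I2z * ν * r ^ 2 / (2 * (I2z + ν * r ^ 2)) := by positivity
  calc ν / (2 * r ^ 3) * B
      = I2z * ν * r ^ 2 / (2 * (I2z + ν * r ^ 2)) * ((I2z + ν * r ^ 2) / (I2z * r ^ 5) * B) := by
        field_simp
    _ ≤ I2z * ν * r ^ 2 / (2 * (I2z + ν * r ^ 2)) * ω ^ 2 := mul_le_mul_of_nonneg_left hrate hfac
    _ = I2z * ν * r ^ 2 * ω ^ 2 / (2 * (I2z + ν * r ^ 2)) := by ring

/-- The circulation bound on the rate at a `φ₂ = 0` crossing makes the energy at least its value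
`-ν (S - 3A) / (2 r_a³)` for a body resting at `φ₂ = ±90°` at apoapsis. -/
theorem neg_div_le_librationEnergy_of_rate_le {ra ω : ℝ} (hν : 0 < ν) (hI : 0 < I2z)
    (hr : 0 < r) (hra : ra ≠ 0)
    (hrate : (I2z + ν * r ^ 2) / (I2z * r ^ 5) * (3 * A + (S - 3 * A) * (1 - r ^ 3 / ra ^ 3))
      ≤ ω ^ 2) :
    -(ν * (S - 3 * A)) / (2 * ra ^ 3) ≤ librationEnergy ν I2z A S r ω 0 := by
  have hkin := div_mul_le_kinetic_of_rate_le hν hI hr hrate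
  have hsplit : -(ν * (S - 3 * A)) / (2 * ra ^ 3)
      = ν / (2 * r ^ 3) * (3 * A + (S - 3 * A) * (1 - r ^ 3 / ra ^ 3)) - ν / (2 * r ^ 3) * S := by
    field_simp
    ring
  rw [hsplit, librationEnergy, sin_zero]
  linarith

theorem one_le_sin_sq_of_energy_ge {ra φ : ℝ} (hν : 0 < ν) (hA : 0 < A) (hS : 3 * A ≤ S)
    (hr : 0 < r) (hrb : r ≤ ra)
    (hE : -(ν * (S - 3 * A)) / (2 * ra ^ 3) ≤ ν * (3 * A * sin φ ^ 2 - S) / (2 * r ^ 3)) :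
    1 ≤ sin φ ^ 2 := by
  have hra : 0 < ra := hr.trans_le hrb
  have hcube : r ^ 3 ≤ ra ^ 3 := pow_le_pow_left₀ hr.le hrb 3
  have hνS : 0 ≤ ν * (S - 3 * A) := mul_nonneg hν.le (sub_nonneg.2 hS)
  rw [div_le_div_iff₀ (by positivity) (by positivity)] at hE
  have key : 0 ≤ ν * (3 * A) * ra ^ 3 * (sin φ ^ 2 - 1) := by
    linarith [mul_le_mul_of_nonneg_left hcube hνS]
  exact sub_nonneg.1 ((mul_nonneg_iff_of_pos_left (by positivity)).1 key)

end LibrationEnergy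

theorem abs_sin_eq_one_of_one_le_sin_sq {x : ℝ} (h : 1 ≤ sin x ^ 2) : |sin x| = 1 := by
  have hsq : sin x ^ 2 = 1 := le_antisymm (sin_sq_le_one x) h
  rw [← sqrt_sq_eq_abs, hsq, sqrt_one]

theorem sufficient_condition_for_circulation_general
    (ν I2z A S ra : ℝ) (hν : 0 < ν) (hI : 0 < I2z) (hA : 0 < A)
    (hS : 3 * A ≤ S)
    (r φ₂ : ℝ → ℝ)
    (hrpos : ∀ t, 0 < r t) (hrb : ∀ t, r t ≤ ra)
    (hc : ∀ t s : ℝ,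
      I2z * ν * (r t)^2 * (deriv φ₂ t)^2 / (2 * (I2z + ν * (r t)^2))
        + (3 * ν / (2 * (r t)^3)) * A * (Real.sin (φ₂ t))^2
        - (ν / (2 * (r t)^3)) * S
      = I2z * ν * (r s)^2 * (deriv φ₂ s)^2 / (2 * (I2z + ν * (r s)^2))
        + (3 * ν / (2 * (r s)^3)) * A * (Real.sin (φ₂ s))^2
        - (ν / (2 * (r s)^3)) * S)
    (t₀ : ℝ) (hφ₀ : φ₂ t₀ = 0)
    (hrate : ((I2z + ν * (r t₀)^2) / (I2z * (r t₀)^5))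
        * (3 * A + (S - 3 * A) * (1 - (r t₀)^3 / ra^3))
      ≤ (deriv φ₂ t₀)^2) :
    ∀ t : ℝ, deriv φ₂ t = 0 →
      1 ≤ (Real.sin (φ₂ t))^2 ∧ |Real.sin (φ₂ t)| = 1 := by
  intro t ht
  have hra : ra ≠ 0 := ((hrpos t).trans_le (hrb t)).ne'
  have hinit : -(ν * (S - 3 * A)) / (2 * ra ^ 3)
      ≤ librationEnergy ν I2z A S (r t₀) (deriv φ₂ t₀) (φ₂ t₀) := by
    rw [hφ₀]
    exact neg_div_le_librationEnergy_of_rate_le hν hI (hrpos t₀) hra hrate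
  have hturn : librationEnergy ν I2z A S (r t) (deriv φ₂ t) (φ₂ t)
      = ν * (3 * A * sin (φ₂ t) ^ 2 - S) / (2 * r t ^ 3) := by
    rw [ht, librationEnergy_zero_rate]
  have hsin : 1 ≤ sin (φ₂ t) ^ 2 :=
    one_le_sin_sq_of_energy_ge hν hA hS (hrpos t) (hrb t)
      (hturn ▸ hinit.trans_eq (hc t t₀).symm)
  exact ⟨hsin, abs_sin_eq_one_of_one_le_sin_sq hsin⟩

/-- Sufficient condition for circulation in the decoupled (`ν ≈ 1`) case: if
the libration energy is conserved and the initial libration rate at a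
`φ₂ = 0` crossing exceeds the circulation bound formed with the apoapsis
radius `r_a`, then the libration rate can only vanish at `|sin φ₂| = 1`, i.e.
at a libration angle of ±90°, so the secondary must circulate. -/
theorem sufficient_condition_for_circulation
    (ν I2z A S ra : ℝ) (hν : 0 < ν) (hI : 0 < I2z) (hA : 0 < A)
    (hS : 3 * A ≤ S) (hra : 0 < ra)
    (r φ₂ : ℝ → ℝ)
    (hr : Differentiable ℝ r) (hφ : Differentiable ℝ φ₂)
    (hrpos : ∀ t, 0 < r t) (hrb : ∀ t, r t ≤ ra)
    (hc : ∀ t s : ℝ,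
      I2z * ν * (r t)^2 * (deriv φ₂ t)^2 / (2 * (I2z + ν * (r t)^2))
        + (3 * ν / (2 * (r t)^3)) * A * (Real.sin (φ₂ t))^2
        - (ν / (2 * (r t)^3)) * S
      = I2z * ν * (r s)^2 * (deriv φ₂ s)^2 / (2 * (I2z + ν * (r s)^2))
        + (3 * ν / (2 * (r s)^3)) * A * (Real.sin (φ₂ s))^2
        - (ν / (2 * (r s)^3)) * S)
    (t₀ : ℝ) (hφ₀ : φ₂ t₀ = 0)
    (hrate : ((I2z + ν * (r t₀)^2) / (I2z * (r t₀)^5))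
        * (3 * A + (S - 3 * A) * (1 - (r t₀)^3 / ra^3))
      ≤ (deriv φ₂ t₀)^2) :
    ∀ t : ℝ, deriv φ₂ t = 0 →
      1 ≤ (Real.sin (φ₂ t))^2 ∧ |Real.sin (φ₂ t)| = 1 :=
  sufficient_condition_for_circulation_general ν I2z A S ra hν hI hA hS r φ₂ hrpos hrb hc t₀ hφ₀
    hrate
end

section
/- (Sufficient condition for bounded libration, ν ≈ 1 decoupled case.) Let ν > 0, Ī₂z > 0, A > 0, S ∈ ℝ with S ≥ 3A, and r_p > 0. Let r, φ₂ : ℝ → ℝ be differentiable with r(t) ≥ r_p for all t, and suppose the libration energy c(t) = Ī₂z ν r² (φ₂')²/(2 I_z(r)) + (3ν/(2r³)) A sin²φ₂ − (ν/(2r³)) S is constant in t. Suppose at some time t₀ we have φ₂(t₀) = 0 and, writing r₀ = r(t₀), the initial libration rate satisfies φ₂'(t₀)² < (I_z(r₀)/(Ī₂z r₀⁵))·[3A + (S − 3A)(1 − r₀³/r_p³)]. Then sin²φ₂(t) < 1 for all t; i.e. the libration angle never reaches ±90° and the secondary never circulates. -/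
/-!
The libration energy is the sum of the nonnegative kinetic term and the potential
`ν (3 A sin² φ₂ - S) / (2 r³)`. Since `S ≥ 3A`, the potential at `sin² φ₂ = 1` is
`ν (3A - S) / (2 r³)`, which is smallest at periapsis. The bound on the initial rate says exactly
that the conserved energy lies below this periapsis value, so `sin² φ₂` can never reach `1`.
-/

open Real

lemma librationEnergy_eq (ν I2z A S r ω φ : ℝ) :
    librationEnergy ν I2z A S r ω φ =
      I2z * ν * r ^ 2 * ω ^ 2 / (2 * (I2z + ν * r ^ 2))
        + ν / (2 * r ^ 3) * (3 * A * sin φ ^ 2 - S) := by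
  unfold librationEnergy
  ring

lemma separatrix_potential_le_of_periapsis_le {ν A S rp r : ℝ} (hν : 0 ≤ ν) (hS : 3 * A ≤ S)
    (hrp : 0 < rp) (hr : rp ≤ r) :
    ν / (2 * rp ^ 3) * (3 * A - S) ≤ ν / (2 * r ^ 3) * (3 * A - S) := by
  refine mul_le_mul_of_nonpos_right ?_ (by linarith)
  gcongr

lemma librationEnergy_at_zero_lt {ν I2z A S rp r₀ ω : ℝ} (hν : 0 < ν) (hI : 0 < I2z)
    (hrp : 0 < rp) (hr₀ : 0 < r₀)
    (hω : ω ^ 2 < (I2z + ν * r₀ ^ 2) / (I2z * r₀ ^ 5)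
        * (3 * A + (S - 3 * A) * (1 - r₀ ^ 3 / rp ^ 3))) :
    librationEnergy ν I2z A S r₀ ω 0 < ν / (2 * rp ^ 3) * (3 * A - S) := by
  calc librationEnergy ν I2z A S r₀ ω 0
      = I2z * ν * r₀ ^ 2 / (2 * (I2z + ν * r₀ ^ 2)) * ω ^ 2 - ν / (2 * r₀ ^ 3) * S := by
        rw [librationEnergy_eq, sin_zero]
        ring
    _ < I2z * ν * r₀ ^ 2 / (2 * (I2z + ν * r₀ ^ 2))
          * ((I2z + ν * r₀ ^ 2) / (I2z * r₀ ^ 5)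
            * (3 * A + (S - 3 * A) * (1 - r₀ ^ 3 / rp ^ 3)))
          - ν / (2 * r₀ ^ 3) * S := by gcongr
    _ = ν / (2 * rp ^ 3) * (3 * A - S) := by
        field_simp
        ring

lemma sin_sq_lt_one_of_librationEnergy_lt {ν I2z A S rp r ω φ : ℝ} (hν : 0 < ν)
    (hI : 0 ≤ I2z) (hA : 0 < A) (hS : 3 * A ≤ S) (hrp : 0 < rp) (hr : rp ≤ r)
    (hE : librationEnergy ν I2z A S r ω φ < ν / (2 * rp ^ 3) * (3 * A - S)) :
    sin φ ^ 2 < 1 := by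
  have hkin : 0 ≤ I2z * ν * r ^ 2 * ω ^ 2 / (2 * (I2z + ν * r ^ 2)) := by positivity
  have hpot : ν / (2 * r ^ 3) * (3 * A * sin φ ^ 2 - S) < ν / (2 * r ^ 3) * (3 * A - S) := by
    rw [librationEnergy_eq] at hE
    linarith [separatrix_potential_le_of_periapsis_le hν.le hS hrp hr]
  have hr₀ : 0 < r := hrp.trans_le hr
  have hsin : 3 * A * sin φ ^ 2 - S < 3 * A - S := lt_of_mul_lt_mul_left hpot (by positivity)
  exact lt_of_mul_lt_mul_left (by linarith : 3 * A * sin φ ^ 2 < 3 * A * 1) (by positivity)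

theorem sufficient_condition_for_bounded_libration_general
    (ν I2z A S rp : ℝ) (hν : 0 < ν) (hI : 0 < I2z) (hA : 0 < A)
    (hS : 3 * A ≤ S) (hrp : 0 < rp)
    (r φ₂ : ℝ → ℝ)
    (hrb : ∀ t, rp ≤ r t)
    (hc : ∀ t s : ℝ,
      I2z * ν * (r t)^2 * (deriv φ₂ t)^2 / (2 * (I2z + ν * (r t)^2))
        + (3 * ν / (2 * (r t)^3)) * A * (Real.sin (φ₂ t))^2
        - (ν / (2 * (r t)^3)) * S
      = I2z * ν * (r s)^2 * (deriv φ₂ s)^2 / (2 * (I2z + ν * (r s)^2))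
        + (3 * ν / (2 * (r s)^3)) * A * (Real.sin (φ₂ s))^2
        - (ν / (2 * (r s)^3)) * S)
    (t₀ : ℝ) (hφ₀ : φ₂ t₀ = 0)
    (hrate : (deriv φ₂ t₀)^2
      < ((I2z + ν * (r t₀)^2) / (I2z * (r t₀)^5))
          * (3 * A + (S - 3 * A) * (1 - (r t₀)^3 / rp^3))) :
    ∀ t : ℝ, (Real.sin (φ₂ t))^2 < 1 := by
  intro t
  have hE₀ : librationEnergy ν I2z A S (r t₀) (deriv φ₂ t₀) (φ₂ t₀)
      < ν / (2 * rp ^ 3) * (3 * A - S) := by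
    rw [hφ₀]
    exact librationEnergy_at_zero_lt hν hI hrp (hrp.trans_le (hrb t₀)) hrate
  have hE : librationEnergy ν I2z A S (r t) (deriv φ₂ t) (φ₂ t)
      < ν / (2 * rp ^ 3) * (3 * A - S) := (hc t t₀).trans_lt hE₀
  exact sin_sq_lt_one_of_librationEnergy_lt hν hI.le hA hS hrp (hrb t) hE

/-- Sufficient condition for bounded libration in the decoupled (`ν ≈ 1`)
case: if the libration energy is conserved and the initial libration rate at a
`φ₂ = 0` crossing is strictly below the bound formed with the periapsis radius
`r_p`, then the libration angle never reaches ±90°. -/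
theorem sufficient_condition_for_bounded_libration
    (ν I2z A S rp : ℝ) (hν : 0 < ν) (hI : 0 < I2z) (hA : 0 < A)
    (hS : 3 * A ≤ S) (hrp : 0 < rp)
    (r φ₂ : ℝ → ℝ)
    (hr : Differentiable ℝ r) (hφ : Differentiable ℝ φ₂)
    (hrb : ∀ t, rp ≤ r t)
    (hc : ∀ t s : ℝ,
      I2z * ν * (r t)^2 * (deriv φ₂ t)^2 / (2 * (I2z + ν * (r t)^2))
        + (3 * ν / (2 * (r t)^3)) * A * (Real.sin (φ₂ t))^2
        - (ν / (2 * (r t)^3)) * S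
      = I2z * ν * (r s)^2 * (deriv φ₂ s)^2 / (2 * (I2z + ν * (r s)^2))
        + (3 * ν / (2 * (r s)^3)) * A * (Real.sin (φ₂ s))^2
        - (ν / (2 * (r s)^3)) * S)
    (t₀ : ℝ) (hφ₀ : φ₂ t₀ = 0)
    (hrate : (deriv φ₂ t₀)^2
      < ((I2z + ν * (r t₀)^2) / (I2z * (r t₀)^5))
          * (3 * A + (S - 3 * A) * (1 - (r t₀)^3 / rp^3))) :
    ∀ t : ℝ, (Real.sin (φ₂ t))^2 < 1 :=
  sufficient_condition_for_bounded_libration_general ν I2z A S rp hν hI hA hS hrp r φ₂ hrb hc t₀ hφ₀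
    hrate
end

section
/- (Maximum libration angle, ν ≈ 1 decoupled case.) Let ν > 0, Ī₂z > 0, A ≠ 0, S ∈ ℝ. Let r, φ₂ : ℝ → ℝ be differentiable with r(t) > 0 for all t, and suppose the libration energy c(t) = Ī₂z ν r² (φ₂')²/(2 I_z(r)) + (3ν/(2r³)) A sin²φ₂ − (ν/(2r³)) S is constant in t. Suppose at time t₀ we have φ₂(t₀) = 0 with r₀ = r(t₀) and initial libration rate φ̇₂₀ = φ₂'(t₀). Then at every time t with φ₂'(t) = 0, writing r_m = r(t), the libration angle satisfies the exact relation 3A·sin²φ₂(t) = Ī₂z r₀² r_m³ φ̇₂₀² / I_z(r₀) + S·(1 − r_m³/r₀³). -/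
open Real

theorem three_mul_sin_sq_eq_of_librationEnergy_eq {ν I2z A S r₀ ω₀ r φ : ℝ}
    (hν : ν ≠ 0) (hr₀ : r₀ ≠ 0) (hr : r ≠ 0)
    (h : librationEnergy ν I2z A S r 0 φ = librationEnergy ν I2z A S r₀ ω₀ 0) :
    3 * A * sin φ ^ 2
      = I2z * r₀ ^ 2 * r ^ 3 * ω₀ ^ 2 / (I2z + ν * r₀ ^ 2) + S * (1 - r ^ 3 / r₀ ^ 3) := by
  unfold librationEnergy at h
  simp only [sin_zero] at h
  field_simp at h ⊢
  linear_combination h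

theorem maximum_libration_angle_general
    (ν I2z A S : ℝ) (hν : 0 < ν)
    (r φ₂ : ℝ → ℝ)
    (hrpos : ∀ t, 0 < r t)
    (hc : ∀ t s : ℝ,
      I2z * ν * (r t)^2 * (deriv φ₂ t)^2 / (2 * (I2z + ν * (r t)^2))
        + (3 * ν / (2 * (r t)^3)) * A * (Real.sin (φ₂ t))^2
        - (ν / (2 * (r t)^3)) * S
      = I2z * ν * (r s)^2 * (deriv φ₂ s)^2 / (2 * (I2z + ν * (r s)^2))
        + (3 * ν / (2 * (r s)^3)) * A * (Real.sin (φ₂ s))^2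
        - (ν / (2 * (r s)^3)) * S)
    (t₀ : ℝ) (hφ₀ : φ₂ t₀ = 0) :
    ∀ t : ℝ, deriv φ₂ t = 0 →
      3 * A * (Real.sin (φ₂ t))^2
        = I2z * (r t₀)^2 * (r t)^3 * (deriv φ₂ t₀)^2 / (I2z + ν * (r t₀)^2)
          + S * (1 - (r t)^3 / (r t₀)^3) := by
  intro t ht
  have hconserved : librationEnergy ν I2z A S (r t) (deriv φ₂ t) (φ₂ t)
      = librationEnergy ν I2z A S (r t₀) (deriv φ₂ t₀) (φ₂ t₀) := hc t t₀
  rw [ht, hφ₀] at hconserved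
  exact three_mul_sin_sq_eq_of_librationEnergy_eq hν.ne' (hrpos t₀).ne' (hrpos t).ne' hconserved

/-- Maximum libration angle in the decoupled (`ν ≈ 1`) case: if the libration
energy is conserved, then at every turning point of the libration (where
`φ₂' = 0`) the libration angle satisfies the exact relation
`3A sin²φ₂ = Ī₂z r₀² r_m³ φ̇₂₀²/I_z(r₀) + S (1 − r_m³/r₀³)`. -/
theorem maximum_libration_angle
    (ν I2z A S : ℝ) (hν : 0 < ν) (hI : 0 < I2z) (hA : A ≠ 0)
    (r φ₂ : ℝ → ℝ)
    (hr : Differentiable ℝ r) (hφ : Differentiable ℝ φ₂)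
    (hrpos : ∀ t, 0 < r t)
    (hc : ∀ t s : ℝ,
      I2z * ν * (r t)^2 * (deriv φ₂ t)^2 / (2 * (I2z + ν * (r t)^2))
        + (3 * ν / (2 * (r t)^3)) * A * (Real.sin (φ₂ t))^2
        - (ν / (2 * (r t)^3)) * S
      = I2z * ν * (r s)^2 * (deriv φ₂ s)^2 / (2 * (I2z + ν * (r s)^2))
        + (3 * ν / (2 * (r s)^3)) * A * (Real.sin (φ₂ s))^2
        - (ν / (2 * (r s)^3)) * S)
    (t₀ : ℝ) (hφ₀ : φ₂ t₀ = 0) :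
    ∀ t : ℝ, deriv φ₂ t = 0 →
      3 * A * (Real.sin (φ₂ t))^2
        = I2z * (r t₀)^2 * (r t)^3 * (deriv φ₂ t₀)^2 / (I2z + ν * (r t₀)^2)
          + S * (1 - (r t)^3 / (r t₀)^3) :=
  maximum_libration_angle_general ν I2z A S hν r φ₂ hrpos hc t₀ hφ₀
end

section
/- (Uniform condition for guaranteed circulation: the circulation bound is maximized at periapsis.) Let a > 0, 0 ≤ e < 1, ν > 0, Ī₂z > 0, and A, B ≥ 0. For f ∈ ℝ define x(f) = 1 + e cos f, r₀(f) = a(1 − e²)/x(f), and Φ(f) = ((Ī₂z + ν r₀(f)²)/r₀(f)⁵)·[A + B·(1 − (1 − e)³/x(f)³)]. Then for all f ∈ ℝ, Φ(f) ≤ Φ(0); moreover, writing r_p = a(1 − e), one has Φ(0) = ((Ī₂z + ν r_p²)/r_p⁵)·[A + B·2e(3 + e²)/(1 + e)³]. Hence the circulation bound over an entire Keplerian orbit is attained at true anomaly f = 0 (i.e. at periapsis, r₀ = r_p). -/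
open Real

/-- Radius at true anomaly `f` on a Keplerian orbit. -/
noncomputable def kepR (a e f : ℝ) : ℝ := a * (1 - e^2) / (1 + e * Real.cos f)

/-- The circulation bound as a function of the true anomaly `f` of the
`φ₂ = 0` crossing. -/
noncomputable def circBound (a e ν I2z A B : ℝ) (f : ℝ) : ℝ :=
  ((I2z + ν * (kepR a e f)^2) / (kepR a e f)^5) *
    (A + B * (1 - (1 - e)^3 / (1 + e * Real.cos f)^3))

/-!
Writing `x = 1 + e cos f` and `c = a(1 - e²)`, so that `r₀ = c / x`, the bound becomes
`(Ī₂z x² + ν c²) (A x³ + B (x³ - (1 - e)³)) / c⁵`. On `x ≥ 1 - e` both factors are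
nonnegative and nondecreasing in `x`, and `x` ranges over `[1 - e, 1 + e]`, with its
maximum `1 + e` at `f = 0`.
-/

def circNumerator (c e ν I2z A B x : ℝ) : ℝ :=
  (I2z * x^2 + ν * c^2) * (A * x^3 + B * (x^3 - (1 - e)^3))

lemma one_add_mul_cos_mem_Icc {e : ℝ} (he : 0 ≤ e) (f : ℝ) :
    1 + e * cos f ∈ Set.Icc (1 - e) (1 + e) := by
  constructor <;> nlinarith [neg_one_le_cos f, cos_le_one f]

lemma circBound_eq_circNumerator_div (a e ν I2z A B : ℝ) {f : ℝ} (hx : 1 + e * cos f ≠ 0) :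
    circBound a e ν I2z A B f =
      circNumerator (a * (1 - e^2)) e ν I2z A B (1 + e * cos f) / (a * (1 - e^2))^5 := by
  unfold circBound kepR circNumerator
  field_simp

lemma circNumerator_monotoneOn (c : ℝ) {e ν I2z A B : ℝ} (hν : 0 ≤ ν) (hI : 0 ≤ I2z)
    (hA : 0 ≤ A) (hB : 0 ≤ B) (he : e ≤ 1) :
    MonotoneOn (circNumerator c e ν I2z A B) (Set.Ici (1 - e)) := by
  intro x hx y hy hxy
  have hx0 : 0 ≤ x := le_trans (by linarith) hx
  have hcube : (1 - e)^3 ≤ x^3 := pow_le_pow_left₀ (by linarith) hx 3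
  have hcube_xy : x^3 ≤ y^3 := pow_le_pow_left₀ hx0 hxy 3
  have hsq_xy : x^2 ≤ y^2 := pow_le_pow_left₀ hx0 hxy 2
  unfold circNumerator
  apply mul_le_mul
  · gcongr
  · gcongr
  · have : 0 ≤ x^3 := by positivity
    nlinarith
  · positivity

lemma circBound_zero (a e ν I2z A B : ℝ) (ha : a ≠ 0) (he₁ : 1 - e ≠ 0) (he₂ : 1 + e ≠ 0) :
    circBound a e ν I2z A B 0
      = ((I2z + ν * (a * (1 - e))^2) / (a * (1 - e))^5) *
          (A + B * (2 * e * (3 + e^2) / (1 + e)^3)) := by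
  unfold circBound kepR
  rw [cos_zero, mul_one, show (1 : ℝ) - e^2 = (1 - e) * (1 + e) by ring]
  field_simp
  ring

/-- Uniform condition for guaranteed circulation: over an entire Keplerian
orbit, the circulation bound is maximized at periapsis (`f = 0`), where it
takes the closed-form value with `r_p = a(1 − e)`. -/
theorem circulation_bound_max_at_periapsis
    (a e ν I2z A B : ℝ) (ha : 0 < a) (he0 : 0 ≤ e) (he1 : e < 1)
    (hν : 0 < ν) (hI : 0 < I2z) (hA : 0 ≤ A) (hB : 0 ≤ B) :
    (∀ f : ℝ, circBound a e ν I2z A B f ≤ circBound a e ν I2z A B 0) ∧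
    circBound a e ν I2z A B 0
      = ((I2z + ν * (a * (1 - e))^2) / (a * (1 - e))^5) *
          (A + B * (2 * e * (3 + e^2) / (1 + e)^3)) := by
  have hc : 0 < a * (1 - e^2) := mul_pos ha (by nlinarith)
  refine ⟨fun f => ?_, circBound_zero a e ν I2z A B ha.ne' (by linarith) (by linarith)⟩
  obtain ⟨hlo, hhi⟩ := one_add_mul_cos_mem_Icc he0 f
  have hmono := circNumerator_monotoneOn (a * (1 - e^2)) hν.le hI.le hA hB he1.le
  rw [circBound_eq_circNumerator_div a e ν I2z A B (by linarith),
    circBound_eq_circNumerator_div a e ν I2z A B (by rw [cos_zero]; linarith), cos_zero,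
    mul_one]
  gcongr
  exact hmono hlo (by simp only [Set.mem_Ici]; linarith) hhi
end
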